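/- Let G be a group and let ρ0, ρ1, ρ2 ∈ G satisfy ρ0^2 = ρ1^2 = ρ2^2 = 1 and ρ0ρ2 = ρ2ρ0. Then (i) [(ρ0ρ1)^2, ρ2] = (ρ1ρ0ρ1ρ2)^2, and (ii) if in addition (ρ0ρ1)^4 = 1 and (ρ1ρ2)^4 = 1, then [(ρ0ρ1)^2, (ρ1ρ2)^2] = (ρ0ρ1ρ2)^4, where [x, y] denotes the commutator x⁻¹y⁻¹xy. -/

import Mathlib

/-!
Write `a, b, c` for `ρ0, ρ1, ρ2`. Inverting the involutions turns `(a b)⁻²` into `(b a)²`, and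
`a c a = c` collapses `[(a b)², c] = b a b (a c a) b a b c` to `(b a b c)²`. When `(a b)⁴ = (b c)⁴ = 1`
both `(a b)²` and `(b c)²` are involutions, so their commutator is the square of their product,
and that product is `a b a (b b) c b c = a b c a b c`.
-/

-- Not Mathlib's `⁅x, y⁆ = x * y * x⁻¹ * y⁻¹`.
def pc {G : Type*} [Group G] (x y : G) : G := x⁻¹ * y⁻¹ * x * y

section Involution

variable {G : Type*} [Group G] {a b c x y : G}

lemma inv_eq_self_of_sq_eq_one (ha : a ^ 2 = 1) : a⁻¹ = a :=
  inv_eq_of_mul_eq_one_right ((sq a).symm.trans ha)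

lemma mul_mul_eq_of_sq_eq_one_of_mul_comm (ha : a ^ 2 = 1) (hac : a * c = c * a) : a * c * a = c := by
  rw [hac, mul_assoc, ← sq, ha, mul_one]

lemma pc_eq_sq_of_sq_eq_one (hx : x ^ 2 = 1) (hy : y ^ 2 = 1) : pc x y = (x * y) ^ 2 := by
  rw [pc, inv_eq_self_of_sq_eq_one hx, inv_eq_self_of_sq_eq_one hy, sq, ← mul_assoc]

lemma pc_sq_mul_of_sq_eq_one (ha : a ^ 2 = 1) (hb : b ^ 2 = 1) (hc : c ^ 2 = 1)
    (hac : a * c = c * a) : pc ((a * b) ^ 2) c = (b * a * b * c) ^ 2 :=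
  calc pc ((a * b) ^ 2) c
      = b * a * b * (a * c * a) * b * a * b * c := by
        simp only [pc, sq, mul_inv_rev, inv_eq_self_of_sq_eq_one ha,
          inv_eq_self_of_sq_eq_one hb, inv_eq_self_of_sq_eq_one hc, mul_assoc]
    _ = (b * a * b * c) ^ 2 := by
        rw [mul_mul_eq_of_sq_eq_one_of_mul_comm ha hac, sq]
        simp only [mul_assoc]

lemma sq_mul_mul_sq_mul_of_sq_eq_one (hb : b ^ 2 = 1) (hac : a * c = c * a) :
    (a * b) ^ 2 * (b * c) ^ 2 = (a * b * c) ^ 2 :=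
  calc (a * b) ^ 2 * (b * c) ^ 2
      = a * b * a * b ^ 2 * c * b * c := by simp only [sq, mul_assoc]
    _ = (a * b * c) ^ 2 := by rw [hb, mul_one, mul_assoc (a * b), hac, sq]; simp only [mul_assoc]

lemma pc_sq_mul_sq_mul_of_pow_four_eq_one (hb : b ^ 2 = 1) (hac : a * c = c * a)
    (hab : (a * b) ^ 4 = 1) (hbc : (b * c) ^ 4 = 1) :
    pc ((a * b) ^ 2) ((b * c) ^ 2) = (a * b * c) ^ 4 := by
  have hab2 : ((a * b) ^ 2) ^ 2 = 1 := by rw [← pow_mul]; exact hab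
  have hbc2 : ((b * c) ^ 2) ^ 2 = 1 := by rw [← pow_mul]; exact hbc
  rw [pc_eq_sq_of_sq_eq_one hab2 hbc2, sq_mul_mul_sq_mul_of_sq_eq_one hb hac, ← pow_mul]

end Involution

/-- Identities from the proof of Theorem 4.1 for the quotient group `G2` of type `{4,4}`:
(i) `[(ρ0 ρ1)², ρ2] = (ρ1 ρ0 ρ1 ρ2)²`, and
(ii) if moreover `(ρ0 ρ1)⁴ = (ρ1 ρ2)⁴ = 1`, then `[(ρ0 ρ1)², (ρ1 ρ2)²] = (ρ0 ρ1 ρ2)⁴`. -/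
theorem stmt_19 {G : Type*} [Group G] (ρ0 ρ1 ρ2 : G)
    (h0 : ρ0 ^ 2 = 1) (h1 : ρ1 ^ 2 = 1) (h2 : ρ2 ^ 2 = 1)
    (hc : ρ0 * ρ2 = ρ2 * ρ0) :
    pc ((ρ0 * ρ1) ^ 2) ρ2 = (ρ1 * ρ0 * ρ1 * ρ2) ^ 2 ∧
    ((ρ0 * ρ1) ^ 4 = 1 → (ρ1 * ρ2) ^ 4 = 1 →
      pc ((ρ0 * ρ1) ^ 2) ((ρ1 * ρ2) ^ 2) = (ρ0 * ρ1 * ρ2) ^ 4) :=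
  ⟨pc_sq_mul_of_sq_eq_one h0 h1 h2 hc, pc_sq_mul_sq_mul_of_pow_four_eq_one h1 hc⟩
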